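/- If A is an n-by-n complex matrix with ‖A‖ = 1 and w(A ⊗ J_m) = w(J_m) = cos(π/(m+1)), then ‖A^{m−1}‖ = 1, where J_m is the m-by-m nilpotent Jordan block. -/

import Mathlib

/-!
Take a unit vector `ξ` at which `w(A ⊗ J_m)` is attained and cut it into blocks
`x_0, …, x_{m-1} ∈ ℂⁿ`, so that `⟪ξ, (A ⊗ J_m) ξ⟫ = ∑ ⟪x_k, A x_{k+1}⟫`. With `a_k = ‖x_k‖`
and `‖A‖ = 1`,
  `w(J_m) = |∑ ⟪x_k, A x_{k+1}⟫| ≤ ∑ a_k a_{k+1} = ⟪a, J_m a⟫ ≤ w(J_m)`,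
so every inequality is an equality. A nonnegative unit maximiser `a` of `∑ a_k a_{k+1}` has no
zero entry, and equality in Cauchy–Schwarz then forces `A x_{k+1} = r_k x_k` with
`‖A x_{k+1}‖ = ‖x_{k+1}‖`. Chaining these gives `‖A^{m-1} x_{m-1}‖ = ‖x_{m-1}‖ ≠ 0`.
-/

open scoped Kronecker InnerProductSpace

/-- The operator norm (spectral norm) of a complex matrix, viewed as an operator
on Euclidean space. -/
noncomputable def opNorm {n : Type*} [Fintype n] [DecidableEq n] (A : Matrix n n ℂ) : ℝ :=
  ‖Matrix.toEuclideanCLM (𝕜 := ℂ) A‖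

/-- The numerical radius of a complex matrix: the supremum of `|⟨Ax, x⟩|` over
unit vectors `x`. -/
noncomputable def numRadius {n : Type*} [Fintype n] [DecidableEq n] (A : Matrix n n ℂ) : ℝ :=
  sSup {r : ℝ | ∃ x : EuclideanSpace ℂ n, ‖x‖ = 1 ∧
    r = ‖⟪x, Matrix.toEuclideanLin A x⟫_ℂ‖}

/-- The `m`-by-`m` nilpotent Jordan block: zero diagonal, ones on the superdiagonal. -/
def Jordan (m : ℕ) : Matrix (Fin m) (Fin m) ℂ :=
  fun i j => if (i : ℕ) + 1 = (j : ℕ) then 1 else 0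

open Finset Matrix Filter Topology

section NumRadius

variable {ι : Type*} [Fintype ι] [DecidableEq ι]

lemma numRadius_eq_sSup_image (M : Matrix ι ι ℂ) :
    numRadius M = sSup ((fun x => ‖⟪x, Matrix.toEuclideanLin M x⟫_ℂ‖) ''
      Metric.sphere (0 : EuclideanSpace ℂ ι) 1) := by
  simp only [numRadius, Set.image, mem_sphere_zero_iff_norm, eq_comm]

lemma isCompact_numericalRange (M : Matrix ι ι ℂ) :
    IsCompact ((fun x => ‖⟪x, Matrix.toEuclideanLin M x⟫_ℂ‖) ''
      Metric.sphere (0 : EuclideanSpace ℂ ι) 1) :=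
  (isCompact_sphere 0 1).image <| continuous_norm.comp <|
    continuous_id.inner (Matrix.toEuclideanLin M).continuous_of_finiteDimensional

lemma norm_inner_le_numRadius (M : Matrix ι ι ℂ) {x : EuclideanSpace ℂ ι} (hx : ‖x‖ = 1) :
    ‖⟪x, Matrix.toEuclideanLin M x⟫_ℂ‖ ≤ numRadius M := by
  rw [numRadius_eq_sSup_image]
  exact le_csSup (isCompact_numericalRange M).bddAbove ⟨x, mem_sphere_zero_iff_norm.2 hx, rfl⟩

lemma exists_norm_inner_eq_numRadius [Nonempty ι] (M : Matrix ι ι ℂ) :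
    ∃ x : EuclideanSpace ℂ ι, ‖x‖ = 1 ∧ ‖⟪x, Matrix.toEuclideanLin M x⟫_ℂ‖ = numRadius M := by
  obtain ⟨x, hx, hmax⟩ := (isCompact_numericalRange M).sSup_mem
    ((NormedSpace.sphere_nonempty.2 zero_le_one).image _)
  exact ⟨x, mem_sphere_zero_iff_norm.1 hx, hmax.trans (numRadius_eq_sSup_image M).symm⟩

lemma norm_inner_le_numRadius_mul_norm_sq (M : Matrix ι ι ℂ) (x : EuclideanSpace ℂ ι) :
    ‖⟪x, Matrix.toEuclideanLin M x⟫_ℂ‖ ≤ numRadius M * ‖x‖ ^ 2 := by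
  rcases eq_or_ne x 0 with rfl | hx
  · simp
  have hu : ‖(‖x‖⁻¹ : ℂ) • x‖ = 1 := by
    rw [norm_smul, norm_inv, Complex.norm_real, norm_norm, inv_mul_cancel₀ (norm_ne_zero_iff.2 hx)]
  have := norm_inner_le_numRadius M hu
  rw [map_smul, inner_smul_left, inner_smul_right, norm_mul, norm_mul, RCLike.norm_conj,
    norm_inv, Complex.norm_real, norm_norm, ← mul_assoc, ← sq] at this
  have hx2 : 0 < ‖x‖ ^ 2 := by positivity
  rwa [inv_pow, inv_mul_le_iff₀ hx2, mul_comm] at this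

end NumRadius

lemma nonpos_of_forall_pos_mul_le {x w : ℝ} (h : ∀ t > 0, t * x ≤ w * t ^ 2) : x ≤ 0 := by
  have hlim : Tendsto (fun t => w * t) (𝓝[>] 0) (𝓝 0) := by
    simpa using ((continuous_const_mul w).tendsto 0).mono_left nhdsWithin_le_nhds
  refine ge_of_tendsto hlim ?_
  filter_upwards [self_mem_nhdsWithin] with t (ht : 0 < t)
  exact le_of_mul_le_mul_left (by linarith [h t ht]) ht

def jordanForm (m : ℕ) (b : ℕ → ℝ) : ℝ := ∑ k ∈ range m, b k * b (k + 1)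

section JordanForm

variable {m : ℕ} {w : ℝ} {a : ℕ → ℝ}

lemma eq_zero_and_eq_zero_of_jordanForm_eq
    (hw : ∀ b : ℕ → ℝ, b m = 0 → jordanForm m b ≤ w * ∑ k ∈ range m, b k ^ 2)
    (ha : ∀ j, 0 ≤ a j) (ham : a m = 0) (heq : jordanForm m a = w * ∑ k ∈ range m, a k ^ 2)
    {k p : ℕ} (hk : k < m) (hp : p = k ∨ p = k + 1)
    (hpm : p < m) (hap : a p = 0) : a k = 0 ∧ a (k + 1) = 0 := by
  suffices a k + a (k + 1) ≤ 0 by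
    constructor <;> linarith [ha k, ha (k + 1)]
  -- Raising the zero entry `a p` to `t > 0` adds at least `t * (a k + a (k + 1))` to the form
  -- but only `t ^ 2` to the squared norm, which a maximiser cannot afford to first order.
  refine nonpos_of_forall_pos_mul_le (w := w) fun t ht => ?_
  set b := Function.update a p t
  have hab : ∀ j, a j ≤ b j := by
    intro j
    rcases eq_or_ne j p with rfl | hj
    · simp [b, hap, ht.le]
    · simp [b, hj]
  have hb0 : ∀ j, 0 ≤ b j := fun j => (ha j).trans (hab j)
  have hsq : ∑ j ∈ range m, b j ^ 2 = ∑ j ∈ range m, a j ^ 2 + t ^ 2 := by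
    rw [← sub_eq_iff_eq_add', ← sum_sub_distrib, sum_eq_single_of_mem p (mem_range.2 hpm)]
    · simp [b, hap]
    · intro j _ hj
      simp [b, hj]
  have hform : jordanForm m a + t * (a k + a (k + 1)) ≤ jordanForm m b := by
    have hterm : b k * b (k + 1) - a k * a (k + 1) = t * (a k + a (k + 1)) := by
      rcases hp with rfl | rfl <;> simp [b, hap]; ring
    have hmono : ∀ j ∈ range m, 0 ≤ b j * b (j + 1) - a j * a (j + 1) := fun j _ =>
      sub_nonneg.2 (mul_le_mul (hab j) (hab (j + 1)) (ha _) (hb0 j))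
    have := single_le_sum hmono (mem_range.2 hk)
    rw [sum_sub_distrib, hterm] at this
    unfold jordanForm
    linarith
  have := hw b (by simp [b, hpm.ne', ham])
  rw [hsq, mul_add] at this
  linarith

lemma pos_of_jordanForm_eq
    (hw : ∀ b : ℕ → ℝ, b m = 0 → jordanForm m b ≤ w * ∑ k ∈ range m, b k ^ 2)
    (ha : ∀ j, 0 ≤ a j) (ham : a m = 0) (heq : jordanForm m a = w * ∑ k ∈ range m, a k ^ 2)
    (hsum : ∑ k ∈ range m, a k ^ 2 ≠ 0) {k : ℕ} (hk : k < m) :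
    0 < a k := by
  have hstep : ∀ j, j + 1 < m → (a j = 0 ↔ a (j + 1) = 0) := fun j hj =>
    ⟨fun h => (eq_zero_and_eq_zero_of_jordanForm_eq hw ha ham heq (by omega) (.inl rfl)
        (by omega) h).2,
      fun h => (eq_zero_and_eq_zero_of_jordanForm_eq hw ha ham heq (by omega) (.inr rfl)
        hj h).1⟩
  have hzero : ∀ j < m, (a j = 0 ↔ a 0 = 0) := by
    intro j hj
    induction j with
    | zero => rfl
    | succ j ih => rw [← hstep j hj, ih (by omega)]
  have ha0 : a 0 ≠ 0 := fun h0 =>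
    hsum (sum_eq_zero fun j hj => by rw [(hzero j (mem_range.1 hj)).2 h0]; ring)
  exact (ha k).lt_of_ne (Ne.symm ((hzero k hk).not.2 ha0))

end JordanForm

section Chain

variable {𝕜 E : Type*} [RCLike 𝕜]

lemma norm_pow_apply_eq_of_chain [SeminormedAddCommGroup E] [NormedSpace 𝕜 E]
    (L : E →L[𝕜] E) (x : ℕ → E) (N : ℕ)
    (h : ∀ k < N, ∃ r : 𝕜, L (x (k + 1)) = r • x k ∧ ‖L (x (k + 1))‖ = ‖x (k + 1)‖) :
    ‖(L ^ N) (x N)‖ = ‖x N‖ := by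
  suffices ∀ j ≤ N, ∃ d : 𝕜, (L ^ j) (x N) = d • x (N - j) ∧ ‖(L ^ j) (x N)‖ = ‖x N‖ by
    obtain ⟨_, _, hN⟩ := this N le_rfl
    exact hN
  intro j hj
  induction j with
  | zero => exact ⟨1, by simp⟩
  | succ j ih =>
    obtain ⟨d, hd, hnorm⟩ := ih (by omega)
    obtain ⟨r, hr, hLr⟩ := h (N - (j + 1)) (by omega)
    have hk : N - j = N - (j + 1) + 1 := by omega
    have hpow : (L ^ (j + 1)) (x N) = d • L (x (N - j)) := by
      rw [pow_succ', mul_apply_eq_comp, hd, map_smul]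
    refine ⟨d * r, by rw [hpow, hk, hr, smul_smul], ?_⟩
    rw [hpow, norm_smul, hk, hLr, ← norm_smul, ← hk, ← hd, hnorm]

lemma exists_smul_of_norm_inner_eq [NormedAddCommGroup E] [InnerProductSpace 𝕜 E]
    {L : E →L[𝕜] E} (hL : ‖L‖ ≤ 1) {x y : E} (hx : x ≠ 0) (hy : y ≠ 0)
    (h : ‖⟪x, L y⟫_𝕜‖ = ‖x‖ * ‖y‖) : ∃ r : 𝕜, L y = r • x ∧ ‖L y‖ = ‖y‖ := by
  have hle : ‖L y‖ ≤ ‖y‖ := L.le_of_opNorm_le hL y |>.trans_eq (one_mul _)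
  have hge : ‖x‖ * ‖y‖ ≤ ‖x‖ * ‖L y‖ := h ▸ norm_inner_le_norm x (L y)
  have hLy : ‖L y‖ = ‖y‖ := hle.antisymm (le_of_mul_le_mul_left hge (norm_pos_iff.2 hx))
  have hLy0 : L y ≠ 0 := norm_ne_zero_iff.1 (hLy ▸ norm_ne_zero_iff.2 hy)
  obtain ⟨r, -, hr⟩ := (norm_inner_eq_norm_iff hx hLy0).1 (h.trans (by rw [hLy]))
  exact ⟨r, hr, hLy⟩

lemma norm_pow_apply_eq_of_jordanForm_le [NormedAddCommGroup E] [InnerProductSpace 𝕜 E]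
    {L : E →L[𝕜] E} (hL : ‖L‖ ≤ 1) {x : ℕ → E} {m : ℕ} {w : ℝ}
    (hxm : x m = 0) (hx : ∑ k ∈ range m, ‖x k‖ ^ 2 = 1)
    (hw : ∀ b : ℕ → ℝ, b m = 0 → jordanForm m b ≤ w * ∑ k ∈ range m, b k ^ 2)
    (hmax : w ≤ ‖∑ k ∈ range m, ⟪x k, L (x (k + 1))⟫_𝕜‖) :
    x (m - 1) ≠ 0 ∧ ‖(L ^ (m - 1)) (x (m - 1))‖ = ‖x (m - 1)‖ := by
  set a : ℕ → ℝ := fun k => ‖x k‖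
  have hterm : ∀ k ∈ range m, ‖⟪x k, L (x (k + 1))⟫_𝕜‖ ≤ a k * a (k + 1) := fun k _ =>
    (norm_inner_le_norm _ _).trans <| mul_le_mul_of_nonneg_left
      (L.le_of_opNorm_le hL _ |>.trans_eq (one_mul _)) (norm_nonneg _)
  have hchain : w ≤ ∑ k ∈ range m, ‖⟪x k, L (x (k + 1))⟫_𝕜‖ := hmax.trans (norm_sum_le _ _)
  have hle : ∑ k ∈ range m, ‖⟪x k, L (x (k + 1))⟫_𝕜‖ ≤ jordanForm m a := sum_le_sum hterm
  have ha : ∑ k ∈ range m, a k ^ 2 = 1 := hx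
  have ham : a m = 0 := by simp [a, hxm]
  have hform : jordanForm m a ≤ w := (hw a ham).trans_eq (by rw [ha, mul_one])
  have heq : jordanForm m a = w * ∑ k ∈ range m, a k ^ 2 := by
    rw [ha, mul_one]; exact hform.antisymm (hchain.trans hle)
  have hterm_eq := (sum_eq_sum_iff_of_le hterm).1 (hle.antisymm (hform.trans hchain))
  have hpos : ∀ k < m, x k ≠ 0 := fun k hk => norm_pos_iff.1 <|
    pos_of_jordanForm_eq hw (fun _ => norm_nonneg _) ham heq (ha ▸ one_ne_zero) hk
  have hm : 0 < m := Nat.pos_of_ne_zero fun h => by simp [h] at hx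
  refine ⟨hpos _ (by omega), norm_pow_apply_eq_of_chain L x _ fun k hk => ?_⟩
  exact exists_smul_of_norm_inner_eq hL (hpos k (by omega)) (hpos _ (by omega))
    (hterm_eq k (mem_range.2 (by omega)))

end Chain

-- Vectors on `Fin m` are read as sequences vanishing from `m` on, so that the boundary term
-- of `∑ k < m, f k * f (k + 1)` needs no special case.
def extendByZero {α : Type*} [Zero α] {m : ℕ} (v : Fin m → α) (k : ℕ) : α :=
  if h : k < m then v ⟨k, h⟩ else 0

section Jordan

variable {m : ℕ}

lemma extendByZero_fin {α : Type*} [Zero α] (v : Fin m → α) (k : Fin m) :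
    extendByZero v k = v k := by
  simp [extendByZero]

lemma jordan_mulVec (v : Fin m → ℂ) (k : Fin m) :
    (Jordan m *ᵥ v) k = extendByZero v (k + 1) := by
  simp only [mulVec, dotProduct, Jordan, ite_mul, one_mul, zero_mul, extendByZero]
  split_ifs with h
  · rw [sum_eq_single ⟨k + 1, h⟩ (fun i _ hi => if_neg fun e => hi (Fin.ext e.symm))
      (by simp)]
    simp
  · exact sum_eq_zero fun i _ => if_neg fun (e : (k : ℕ) + 1 = i) => h (e ▸ i.is_lt)

lemma inner_jordan (v : EuclideanSpace ℂ (Fin m)) :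
    ⟪v, Matrix.toEuclideanLin (Jordan m) v⟫_ℂ =
      ∑ k ∈ range m, starRingEnd ℂ (extendByZero v k) * extendByZero v (k + 1) := by
  simp only [PiLp.inner_apply, RCLike.inner_apply', toLpLin_apply, jordan_mulVec]
  rw [← Fin.sum_univ_eq_sum_range]
  simp only [extendByZero_fin]

lemma jordanForm_le_numRadius_mul {b : ℕ → ℝ} (hb : b m = 0) :
    jordanForm m b ≤ numRadius (Jordan m) * ∑ k ∈ range m, b k ^ 2 := by
  set x : EuclideanSpace ℂ (Fin m) := WithLp.toLp 2 fun k => (b k : ℂ)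
  have hx : ∀ k ≤ m, extendByZero x.ofLp k = b k := by
    intro k hk
    rcases hk.lt_or_eq with hk | rfl
    · simp [extendByZero, hk, x]
    · simp [extendByZero, hb]
  have hinner : ⟪x, toEuclideanLin (Jordan m) x⟫_ℂ = jordanForm m b := by
    rw [inner_jordan, jordanForm, Complex.ofReal_sum]
    refine sum_congr rfl fun k hk => ?_
    have hk := mem_range.1 hk
    rw [hx k hk.le, hx (k + 1) hk, Complex.conj_ofReal, Complex.ofReal_mul]
  have hnorm : ‖x‖ ^ 2 = ∑ k ∈ range m, b k ^ 2 := by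
    rw [EuclideanSpace.norm_sq_eq, ← Fin.sum_univ_eq_sum_range]
    simp [x]
  calc jordanForm m b ≤ ‖(jordanForm m b : ℂ)‖ := by
        rw [Complex.norm_real, Real.norm_eq_abs]; exact le_abs_self _
    _ ≤ numRadius (Jordan m) * ‖x‖ ^ 2 := hinner ▸ norm_inner_le_numRadius_mul_norm_sq _ x
    _ = _ := by rw [hnorm]

end Jordan

section Kronecker

variable {ι : Type*} {m : ℕ}

def block (ξ : EuclideanSpace ℂ (ι × Fin m)) (k : ℕ) : EuclideanSpace ℂ ι :=
  WithLp.toLp 2 fun i => extendByZero (fun l => ξ (i, l)) k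

lemma block_self (ξ : EuclideanSpace ℂ (ι × Fin m)) : block ξ m = 0 := by
  ext i
  simp [block, extendByZero]

lemma sum_norm_block_sq [Fintype ι] (ξ : EuclideanSpace ℂ (ι × Fin m)) :
    ∑ k ∈ range m, ‖block ξ k‖ ^ 2 = ‖ξ‖ ^ 2 := by
  simp only [EuclideanSpace.norm_sq_eq, ← Fin.sum_univ_eq_sum_range, Fintype.sum_prod_type_right]
  simp [block, extendByZero_fin]

lemma kronecker_jordan_mulVec [Fintype ι] (A : Matrix ι ι ℂ) (ξ : EuclideanSpace ℂ (ι × Fin m))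
    (i : ι) (k : Fin m) : ((A ⊗ₖ Jordan m) *ᵥ ξ.ofLp) (i, k) = (A *ᵥ (block ξ (k + 1)).ofLp) i := by
  simp only [mulVec, dotProduct, kroneckerMap_apply, Fintype.sum_prod_type, mul_assoc,
    ← mul_sum]
  refine sum_congr rfl fun j _ => ?_
  congr 1
  exact jordan_mulVec (fun l => ξ (j, l)) k

lemma inner_kronecker_jordan [Fintype ι] [DecidableEq ι] (A : Matrix ι ι ℂ)
    (ξ : EuclideanSpace ℂ (ι × Fin m)) :
    ⟪ξ, toEuclideanLin (A ⊗ₖ Jordan m) ξ⟫_ℂ =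
      ∑ k ∈ range m, ⟪block ξ k, toEuclideanLin A (block ξ (k + 1))⟫_ℂ := by
  simp only [PiLp.inner_apply, RCLike.inner_apply', toLpLin_apply,
    Fintype.sum_prod_type_right, kronecker_jordan_mulVec, ← Fin.sum_univ_eq_sum_range]
  simp [block, extendByZero_fin]

end Kronecker


theorem stmt8_general (n m : ℕ) (A : Matrix (Fin n) (Fin n) ℂ)
    (h1 : opNorm A = 1)
    (h2 : numRadius (A ⊗ₖ Jordan m) = numRadius (Jordan m)) :
    opNorm (A ^ (m - 1)) = 1 := by
  rw [opNorm, map_pow]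
  set L := toEuclideanCLM (𝕜 := ℂ) A
  have hL : ‖L‖ = 1 := h1
  have : Nonempty (Fin n) := by
    by_contra h
    rw [not_nonempty_iff] at h
    simp [Subsingleton.elim L 0] at hL
  refine le_antisymm ((norm_pow_le L _).trans_eq (by rw [hL, one_pow])) ?_
  rcases Nat.eq_zero_or_pos m with rfl | hm
  · simp
  have : Nonempty (Fin m) := ⟨⟨0, hm⟩⟩
  obtain ⟨ξ, hξ, hmax⟩ := exists_norm_inner_eq_numRadius (A ⊗ₖ Jordan m)
  obtain ⟨hx0, hpow⟩ := norm_pow_apply_eq_of_jordanForm_le hL.le (block_self ξ)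
    (by rw [sum_norm_block_sq, hξ, one_pow]) (fun b hb => jordanForm_le_numRadius_mul hb)
    (by rw [← h2, ← hmax, inner_kronecker_jordan]; rfl)
  have hle := (L ^ (m - 1)).le_opNorm (block ξ (m - 1))
  rw [hpow] at hle
  exact le_of_mul_le_mul_right (by rwa [one_mul]) (norm_pos_iff.2 hx0)

theorem stmt8 (n m : ℕ) (A : Matrix (Fin n) (Fin n) ℂ)
    (h1 : opNorm A = 1)
    (h2 : numRadius (A ⊗ₖ Jordan m) = numRadius (Jordan m))
    (h3 : numRadius (Jordan m) = Real.cos (Real.pi / (m + 1))) :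
    opNorm (A ^ (m - 1)) = 1 :=
  stmt8_general n m A h1 h2
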